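/- Let z = (α, β, M) ∈ Z with |p| ≤ rs, |α| < r and |β| < s. Then z ∈ K_{r,s}^{Λ,1} if and only if there exist vectors ᾱ, β̄ ∈ ℝ³ such that: (i) M₀(z) + ᾱ⊗β̄ = 0; (ii) (α − β)·(ᾱ × β̄) = 0, where × is the cross product on ℝ³; (iii) |ᾱ|² = s² − |β|² and |β̄|² = r² − |α|²; and (iv) α·ᾱ = β·β̄. -/

import Mathlib

open Matrix

noncomputable section

/-- Vectors in ℝ³. -/
abbrev V3 := Fin 3 → ℝ
/-- 3×3 real matrices. -/
abbrev Mat3 := Matrix (Fin 3) (Fin 3) ℝ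
/-- The state space Z = ℝ³ × ℝ³ × ℝ^{3×3}. -/
abbrev Z := V3 × V3 × Mat3

/-- Euclidean dot product on ℝ³. -/
def dot3 (u v : V3) : ℝ := ∑ i, u i * v i
/-- Euclidean norm on ℝ³. -/
def norm3 (v : V3) : ℝ := Real.sqrt (dot3 v v)
/-- Outer (tensor) product u ⊗ v. -/
def outer (u v : V3) : Mat3 := Matrix.vecMulVec u v

/-- The constraint set K_{r,s}. -/
def Krs (r s p : ℝ) : Set Z :=
  {z | z.2.2 = outer z.1 z.2.1 + p • (1 : Mat3) ∧ norm3 z.1 = r ∧ norm3 z.2.1 = s}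

/-- The wave cone Λ. -/
def waveCone : Set Z :=
  {z | ∃ (ξ : V3) (c : ℝ), ξ ≠ 0 ∧ z.2.2 *ᵥ ξ + c • z.1 = 0 ∧
    z.2.2ᵀ *ᵥ ξ + c • z.2.1 = 0 ∧ dot3 z.1 ξ = 0 ∧ dot3 z.2.1 ξ = 0}

/-- M₀(z) = α⊗β − M + p·Id. -/
def M0 (p : ℝ) (z : Z) : Mat3 := outer z.1 z.2.1 - z.2.2 + p • (1 : Mat3)

/-- G(z) = √((r² − |α|²)(s² − |β|²)). -/
def Gfun (r s : ℝ) (z : Z) : ℝ :=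
  Real.sqrt ((r ^ 2 - norm3 z.1 ^ 2) * (s ^ 2 - norm3 z.2.1 ^ 2))

/-- Iterated lamination sets K_{r,s}^{Λ,i}. -/
def lamSet (r s p : ℝ) : ℕ → Set Z
  | 0 => Krs r s p
  | (i + 1) => {z | ∃ zb ∈ waveCone, ∃ t₁ t₂ : ℝ, t₁ ≤ 0 ∧ 0 ≤ t₂ ∧
      z + t₁ • zb ∈ lamSet r s p i ∧ z + t₂ • zb ∈ lamSet r s p i}

/-- Nuclear norm: trace of the PSD square root of AᵀA. -/
def nuclearNorm (A : Mat3) : ℝ :=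
  ((Matrix.posSemidef_conjTranspose_mul_self A).1.eigenvectorUnitary.1 *
    Matrix.diagonal ((√·) ∘ (Matrix.posSemidef_conjTranspose_mul_self A).1.eigenvalues) *
    (star (Matrix.posSemidef_conjTranspose_mul_self A).1.eigenvectorUnitary : Mat3)).trace

/-- f₀(A) = (A₂₃, A₃₁, A₁₂) (0-indexed: (A 1 2, A 2 0, A 0 1)). -/
def f0 (A : Mat3) : V3 := ![A 1 2, A 2 0, A 0 1]

/-- Frobenius norm of a matrix. -/
def frobNorm (A : Mat3) : ℝ := Real.sqrt (∑ i, ∑ j, A i j ^ 2)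

/-- Λ-convexity of a set. -/
def LambdaConvex (S : Set Z) : Prop :=
  ∀ z₁ ∈ S, ∀ z₂ ∈ S, z₁ - z₂ ∈ waveCone →
    ∀ t : ℝ, t ∈ Set.Icc (0 : ℝ) 1 → z₁ + t • (z₂ - z₁) ∈ S

/-- The Λ-convex hull of K_{r,s}: the intersection of all Λ-convex sets containing it. -/
def lambdaHull (r s p : ℝ) : Set Z := ⋂₀ {S : Set Z | LambdaConvex S ∧ Krs r s p ⊆ S}


/-! ### Auxiliary lemmas -/

lemma dot3_expand (u v : V3) : dot3 u v = u 0*v 0 + u 1*v 1 + u 2*v 2 := by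
  simp [dot3, Fin.sum_univ_three]

lemma dot3_self_nonneg (v : V3) : 0 ≤ dot3 v v := by
  rw [dot3_expand]; nlinarith [sq_nonneg (v 0), sq_nonneg (v 1), sq_nonneg (v 2)]

lemma sq_norm3 (v : V3) : norm3 v ^ 2 = dot3 v v :=
  Real.sq_sqrt (dot3_self_nonneg v)

lemma norm3_nonneg (v : V3) : 0 ≤ norm3 v := Real.sqrt_nonneg _

lemma norm3_eq_iff (v : V3) {r : ℝ} (hr : 0 ≤ r) : norm3 v = r ↔ dot3 v v = r^2 := by
  constructor
  · intro h; rw [← sq_norm3, h]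
  · intro h
    rw [norm3, h, Real.sqrt_sq hr]

lemma dot3_self_eq_zero {v : V3} (h : dot3 v v = 0) : v = 0 := by
  rw [dot3_expand] at h
  have h0 : v 0 = 0 := by nlinarith [sq_nonneg (v 0), sq_nonneg (v 1), sq_nonneg (v 2)]
  have h1 : v 1 = 0 := by nlinarith [sq_nonneg (v 0), sq_nonneg (v 1), sq_nonneg (v 2)]
  have h2 : v 2 = 0 := by nlinarith [sq_nonneg (v 0), sq_nonneg (v 1), sq_nonneg (v 2)]
  funext i; fin_cases i <;> simpa

lemma dot3_comm (u v : V3) : dot3 u v = dot3 v u := by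
  rw [dot3_expand, dot3_expand]; ring

lemma dot3_smul_right (u v : V3) (t : ℝ) : dot3 u (t • v) = t * dot3 u v := by
  simp only [dot3_expand, Pi.smul_apply, smul_eq_mul]; ring

lemma dot3_smul_left (u v : V3) (t : ℝ) : dot3 (t • u) v = t * dot3 u v := by
  simp only [dot3_expand, Pi.smul_apply, smul_eq_mul]; ring

lemma dot3_sub_left (u v w : V3) : dot3 (u - v) w = dot3 u w - dot3 v w := by
  simp only [dot3_expand, Pi.sub_apply]; ring

lemma dot3_add_smul (x y : V3) (t : ℝ) :
    dot3 (x + t • y) (x + t • y) = dot3 x x + 2*t*dot3 x y + t^2 * dot3 y y := by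
  simp only [dot3_expand, Pi.add_apply, Pi.smul_apply, smul_eq_mul]; ring

lemma exists_perp (u v : V3) : ∃ ξ : V3, ξ ≠ 0 ∧ dot3 ξ u = 0 ∧ dot3 ξ v = 0 := by
  set A : Matrix (Fin 2) (Fin 3) ℝ := Matrix.of ![u, v] with hA
  have hker : LinearMap.ker A.mulVecLin ≠ ⊥ := by
    intro h
    have hinj : Function.Injective A.mulVecLin := LinearMap.ker_eq_bot.mp h
    have := LinearMap.finrank_le_finrank_of_injective hinj
    rw [Module.finrank_fin_fun, Module.finrank_fin_fun] at this; omega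
  obtain ⟨ξ, hξmem, hξ0⟩ := Submodule.ne_bot_iff _ |>.mp hker
  have hm : A *ᵥ ξ = 0 := hξmem
  refine ⟨ξ, hξ0, ?_, ?_⟩
  · have := congrFun hm 0
    simp [Matrix.mulVec, dotProduct, hA, Fin.sum_univ_three] at this
    rw [dot3_expand]; linarith
  · have := congrFun hm 1
    simp [Matrix.mulVec, dotProduct, hA, Fin.sum_univ_three] at this
    rw [dot3_expand]; linarith

lemma cross_cross3 (ξ u v : V3) :
    crossProduct ξ (crossProduct u v) = dot3 ξ v • u - dot3 ξ u • v := by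
  funext i
  fin_cases i <;>
    simp [crossProduct, dot3_expand, Matrix.cons_val_zero, Matrix.cons_val_one] <;> ring

lemma dot3_cross_left (u v : V3) : dot3 (crossProduct u v) u = 0 := by
  simp [crossProduct, dot3_expand]; ring

lemma dot3_cross_right (u v : V3) : dot3 (crossProduct u v) v = 0 := by
  simp [crossProduct, dot3_expand]; ring

lemma sq_sub_pos {x y : ℝ} (hx : 0 ≤ x) (hxy : x < y) : 0 < y^2 - x^2 := by nlinarith

set_option maxHeartbeats 1000000 in
theorem stmt7 (r s p : ℝ) (hr : 0 < r) (hs : 0 < s) (z : Z)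
    (hp : |p| ≤ r * s) (hα : norm3 z.1 < r) (hβ : norm3 z.2.1 < s) :
    z ∈ lamSet r s p 1 ↔ ∃ a b : V3,
      M0 p z + outer a b = 0 ∧
      dot3 (z.1 - z.2.1) (crossProduct a b) = 0 ∧
      norm3 a ^ 2 = s ^ 2 - norm3 z.2.1 ^ 2 ∧
      norm3 b ^ 2 = r ^ 2 - norm3 z.1 ^ 2 ∧
      dot3 z.1 a = dot3 z.2.1 b := by
  obtain ⟨α, β, M⟩ := z
  dsimp only at hα hβ ⊢
  constructor
  · rintro ⟨⟨A1, B1, N1⟩, ⟨ξ, c, hξ0, hw1, hw2, hw3, hw4⟩, t₁, t₂, ht₁le, ht₂le, h₁, h₂⟩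
    obtain ⟨hm1, ha1, hb1⟩ := h₁
    obtain ⟨hm2, ha2, hb2⟩ := h₂
    have ea1 : dot3 (α + t₁ • A1) (α + t₁ • A1) = r^2 := (norm3_eq_iff _ hr.le).mp ha1
    have ea2 : dot3 (α + t₂ • A1) (α + t₂ • A1) = r^2 := (norm3_eq_iff _ hr.le).mp ha2
    have eb1 : dot3 (β + t₁ • B1) (β + t₁ • B1) = s^2 := (norm3_eq_iff _ hs.le).mp hb1
    have eb2 : dot3 (β + t₂ • B1) (β + t₂ • B1) = s^2 := (norm3_eq_iff _ hs.le).mp hb2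
    rw [dot3_add_smul, ← sq_norm3 α] at ea1 ea2
    rw [dot3_add_smul, ← sq_norm3 β] at eb1 eb2
    have hnα0 := norm3_nonneg α
    have hnβ0 := norm3_nonneg β
    have hQ : 0 < r^2 - norm3 α^2 := sq_sub_pos hnα0 hα
    have hP : 0 < s^2 - norm3 β^2 := sq_sub_pos hnβ0 hβ
    have ht₁ : t₁ < 0 := by
      rcases ht₁le.lt_or_eq with h | h
      · exact h
      · exfalso; subst h; norm_num at ea1; linarith
    have ht₂ : 0 < t₂ := by
      rcases ht₂le.lt_or_eq with h | h
      · exact h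
      · exfalso; rw [← h] at ea2; norm_num at ea2; linarith
    have htne : t₂ - t₁ ≠ 0 := sub_ne_zero.mpr (ne_of_gt (lt_trans ht₁ ht₂))
    have hsumα : dot3 A1 A1 * (t₁ + t₂) = -(2 * dot3 α A1) := by
      apply mul_left_cancel₀ htne
      linear_combination ea2 - ea1
    have hsumβ : dot3 B1 B1 * (t₁ + t₂) = -(2 * dot3 β B1) := by
      apply mul_left_cancel₀ htne
      linear_combination eb2 - eb1
    have hprodα : dot3 A1 A1 * (t₁ * t₂) = norm3 α^2 - r^2 := by
      linear_combination t₁ * hsumα - ea1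
    have hprodβ : dot3 B1 B1 * (t₁ * t₂) = norm3 β^2 - s^2 := by
      linear_combination t₁ * hsumβ - eb1
    have ht12 : t₁ * t₂ < 0 := mul_neg_of_neg_of_pos ht₁ ht₂
    have hAα : 0 < dot3 A1 A1 := by
      by_contra hcon
      push_neg at hcon
      have hnn : 0 ≤ dot3 A1 A1 * (t₁ * t₂) := by
        rw [show dot3 A1 A1 * (t₁ * t₂) = (-(dot3 A1 A1)) * (-(t₁ * t₂)) by ring]
        exact mul_nonneg (by linarith) (by linarith)
      linarith
    have hAβ : 0 < dot3 B1 B1 := by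
      by_contra hcon
      push_neg at hcon
      have hnn : 0 ≤ dot3 B1 B1 * (t₁ * t₂) := by
        rw [show dot3 B1 B1 * (t₁ * t₂) = (-(dot3 B1 B1)) * (-(t₁ * t₂)) by ring]
        exact mul_nonneg (by linarith) (by linarith)
      linarith
    have em : ∀ t : ℝ, (M + t • N1 = outer (α + t • A1) (β + t • B1) + p • (1:Mat3)) →
        ∀ i j, M i j + t * N1 i j
          = (α i + t * A1 i) * (β j + t * B1 j) + p * (if i = j then (1:ℝ) else 0) := by
      intro t hm i j
      have h := congrFun (congrFun hm i) j
      simp only [outer, Matrix.add_apply, Matrix.smul_apply, Matrix.vecMulVec_apply,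
        Matrix.one_apply, smul_eq_mul, Pi.add_apply, Pi.smul_apply] at h
      linarith [h]
    have em1 := em t₁ hm1
    have em2 := em t₂ hm2
    have hMbar : ∀ i j, N1 i j = A1 i * β j + α i * B1 j + (t₁ + t₂) * (A1 i * B1 j) := by
      intro i j
      apply mul_left_cancel₀ htne
      linear_combination em2 i j - em1 i j
    have hM0e : ∀ i j, α i * β j - M i j + p * (if i = j then (1:ℝ) else 0)
        = t₁ * t₂ * (A1 i * B1 j) := by
      intro i j
      linear_combination t₁ * hMbar i j - em1 i j
    have hw3' := hw3; have hw4' := hw4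
    rw [dot3_expand] at hw3' hw4'
    have hparts1 : ∀ i, (dot3 β ξ + c) * A1 i = 0 := by
      intro i
      have h := congrFun hw1 i
      simp only [Pi.add_apply, Pi.smul_apply, Pi.zero_apply, smul_eq_mul,
        Matrix.mulVec, dotProduct, Fin.sum_univ_three] at h
      rw [dot3_expand]
      linear_combination h - ξ 0 * hMbar i 0 - ξ 1 * hMbar i 1 - ξ 2 * hMbar i 2
        - (α i + (t₁ + t₂) * A1 i) * hw4'
    have hparts2 : ∀ j, (dot3 α ξ + c) * B1 j = 0 := by
      intro j
      have h := congrFun hw2 j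
      simp only [Pi.add_apply, Pi.smul_apply, Pi.zero_apply, smul_eq_mul,
        Matrix.mulVec, dotProduct, Fin.sum_univ_three, Matrix.transpose_apply] at h
      rw [dot3_expand]
      linear_combination h - ξ 0 * hMbar 0 j - ξ 1 * hMbar 1 j - ξ 2 * hMbar 2 j
        - (β j + (t₁ + t₂) * B1 j) * hw3'
    obtain ⟨i₀, hi₀⟩ : ∃ i, A1 i ≠ 0 := by
      by_contra hcon
      push_neg at hcon
      have : dot3 A1 A1 = 0 := by rw [dot3_expand, hcon 0, hcon 1, hcon 2]; ring
      rw [this] at hAα; exact lt_irrefl 0 hAα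
    obtain ⟨j₀, hj₀⟩ : ∃ j, B1 j ≠ 0 := by
      by_contra hcon
      push_neg at hcon
      have : dot3 B1 B1 = 0 := by rw [dot3_expand, hcon 0, hcon 1, hcon 2]; ring
      rw [this] at hAβ; exact lt_irrefl 0 hAβ
    have hcβ : c = -(dot3 β ξ) := by
      rcases mul_eq_zero.mp (hparts1 i₀) with h | h
      · linarith
      · exact absurd h hi₀
    have hcα : c = -(dot3 α ξ) := by
      rcases mul_eq_zero.mp (hparts2 j₀) with h | h
      · linarith
      · exact absurd h hj₀
    have hαβξ : dot3 α ξ = dot3 β ξ := by rw [hcβ] at hcα; linarith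
    have hξA : dot3 ξ A1 = 0 := by rw [dot3_comm]; exact hw3
    have hξB : dot3 ξ B1 = 0 := by rw [dot3_comm]; exact hw4
    have hcc : crossProduct ξ (crossProduct A1 B1) = 0 := by
      rw [cross_cross3, hξA, hξB]; simp
    have hcc2 := cross_cross3 ξ ξ (crossProduct A1 B1)
    rw [hcc, map_zero] at hcc2
    have hw' : dot3 ξ ξ • crossProduct A1 B1
        = dot3 ξ (crossProduct A1 B1) • ξ := (sub_eq_zero.mp hcc2.symm).symm
    have hperp : dot3 (α - β) (crossProduct A1 B1) = 0 := by
      have hξξ : dot3 ξ ξ ≠ 0 := fun h => hξ0 (dot3_self_eq_zero h)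
      have e1 : dot3 (α - β) (dot3 ξ ξ • crossProduct A1 B1)
          = dot3 (α - β) (dot3 ξ (crossProduct A1 B1) • ξ) := by rw [hw']
      rw [dot3_smul_right, dot3_smul_right] at e1
      have e2 : dot3 (α - β) ξ = 0 := by rw [dot3_sub_left, hαβξ]; ring
      rw [e2, mul_zero] at e1
      rcases mul_eq_zero.mp e1 with h | h
      · exact absurd h hξξ
      · exact h
    set sα := Real.sqrt (dot3 A1 A1) with hsαd
    set sβ := Real.sqrt (dot3 B1 B1) with hsβd
    set sπ := Real.sqrt (-(t₁ * t₂)) with hsπd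
    have hsα2 : sα^2 = dot3 A1 A1 := Real.sq_sqrt hAα.le
    have hsβ2 : sβ^2 = dot3 B1 B1 := Real.sq_sqrt hAβ.le
    have hsπ2 : sπ^2 = -(t₁ * t₂) := Real.sq_sqrt (by linarith)
    have hsαne : sα ≠ 0 := ne_of_gt (Real.sqrt_pos.mpr hAα)
    have hsβne : sβ ≠ 0 := ne_of_gt (Real.sqrt_pos.mpr hAβ)
    have key : (sβ * sπ / sα) * (sα * sπ / sβ) = -(t₁ * t₂) := by
      rw [← hsπ2]; field_simp
    refine ⟨(sβ * sπ / sα) • A1, (sα * sπ / sβ) • B1, ?_, ?_, ?_, ?_, ?_⟩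
    · ext i j
      simp only [M0, outer, Matrix.add_apply, Matrix.sub_apply, Matrix.smul_apply,
        Matrix.vecMulVec_apply, Matrix.one_apply, smul_eq_mul, Pi.smul_apply,
        Matrix.zero_apply]
      linear_combination hM0e i j + (A1 i * B1 j) * key
    · have habs : crossProduct ((sβ * sπ / sα) • A1) ((sα * sπ / sβ) • B1)
          = ((sβ * sπ / sα) * (sα * sπ / sβ)) • crossProduct A1 B1 := by
        funext i
        fin_cases i <;> simp [crossProduct, Pi.smul_apply, smul_eq_mul] <;> ring
      rw [habs, dot3_smul_right, hperp, mul_zero]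
    · rw [sq_norm3, dot3_smul_left, dot3_smul_right]
      field_simp
      linear_combination (sπ^2 * dot3 A1 A1) * hsβ2
        + (dot3 A1 A1 * dot3 B1 B1) * hsπ2 - dot3 A1 A1 * hprodβ
        - (s^2 - norm3 β^2) * hsα2
    · rw [sq_norm3, dot3_smul_left, dot3_smul_right]
      field_simp
      linear_combination (sπ^2 * dot3 B1 B1) * hsα2
        + (dot3 A1 A1 * dot3 B1 B1) * hsπ2 - dot3 B1 B1 * hprodα
        - (r^2 - norm3 α^2) * hsβ2
    · rw [dot3_smul_right, dot3_smul_right]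
      field_simp
      linear_combination sπ * dot3 α A1 * hsβ2 - sπ * dot3 β B1 * hsα2
        + (sπ * dot3 B1 B1 / 2) * hsumα - (sπ * dot3 A1 A1 / 2) * hsumβ
  · rintro ⟨a, b, hM, hcross, hna, hnb, hdot⟩
    have hnβ0 : (0:ℝ) ≤ norm3 β := norm3_nonneg β
    have hnα0 : (0:ℝ) ≤ norm3 α := norm3_nonneg α
    have hP : 0 < s^2 - norm3 β ^ 2 := sq_sub_pos hnβ0 hβ
    have hQ : 0 < r^2 - norm3 α ^ 2 := sq_sub_pos hnα0 hα
    have hnapos : 0 < norm3 a := by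
      rcases (norm3_nonneg a).lt_or_eq with h | h
      · exact h
      · exfalso; rw [← h] at hna; norm_num at hna; linarith
    have hnbpos : 0 < norm3 b := by
      rcases (norm3_nonneg b).lt_or_eq with h | h
      · exact h
      · exfalso; rw [← h] at hnb; norm_num at hnb; linarith
    set na := norm3 a with hna0
    set nb := norm3 b with hnb0
    have hane : na ≠ 0 := ne_of_gt hnapos
    have hbne : nb ≠ 0 := ne_of_gt hnbpos
    have hda' : dot3 a a = na^2 := (sq_norm3 a).symm
    have hdb' : dot3 b b = nb^2 := (sq_norm3 b).symm
    obtain ⟨σ, hαa⟩ : ∃ σ : ℝ, dot3 α a = σ * (na * nb) :=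
      ⟨dot3 α a / (na * nb), by field_simp⟩
    have hβb : dot3 β b = σ * (na * nb) := by rw [← hdot]; exact hαa
    set d : ℝ := Real.sqrt (σ^2 + 1) with hd
    have hd2 : d^2 = σ^2 + 1 := Real.sq_sqrt (by positivity)
    have hd0 : 0 ≤ d := Real.sqrt_nonneg _
    have hdabs : |σ| ≤ d := by
      rcases abs_cases σ with ⟨h, _⟩ | ⟨h, _⟩ <;> nlinarith [hd2, hd0, sq_nonneg (d - σ), sq_nonneg (d + σ)]
    have hσd1 : σ ≤ d := le_trans (le_abs_self σ) hdabs
    have hσd2 : -σ ≤ d := le_trans (neg_le_abs σ) hdabs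
    set t₁ : ℝ := -σ - d with ht1d
    set t₂ : ℝ := -σ + d with ht2d
    have hq1 : t₁^2 + 2*σ*t₁ - 1 = 0 := by rw [ht1d]; linear_combination hd2
    have hq2 : t₂^2 + 2*σ*t₂ - 1 = 0 := by rw [ht2d]; linear_combination hd2
    have hMij : ∀ i j, α i * β j - M i j + p * (if i = j then (1:ℝ) else 0) + a i * b j = 0 := by
      intro i j
      have h := congrFun (congrFun hM i) j
      simp only [M0, outer, Matrix.add_apply, Matrix.sub_apply, Matrix.smul_apply,
        Matrix.vecMulVec_apply, Matrix.one_apply, smul_eq_mul, Matrix.zero_apply] at h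
      linarith [h]
    have hinv : (nb/na) * (na/nb) = 1 := by field_simp
    have hkey : ∀ t : ℝ, t^2 + 2*σ*t - 1 = 0 →
        ((α, β, M) + t • (((nb/na) • a, (na/nb) • b,
          vecMulVec ((nb/na) • a) β + vecMulVec α ((na/nb) • b)
            - (2*σ) • vecMulVec ((nb/na) • a) ((na/nb) • b)) : Z)) ∈ Krs r s p := by
      intro t ht
      refine ⟨?_, ?_, ?_⟩
      · show M + t • (vecMulVec ((nb/na) • a) β + vecMulVec α ((na/nb) • b)
            - (2*σ) • vecMulVec ((nb/na) • a) ((na/nb) • b))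
          = outer (α + t • (nb/na) • a) (β + t • (na/nb) • b) + p • (1 : Mat3)
        ext i j
        simp only [outer, Matrix.add_apply, Matrix.sub_apply, Matrix.smul_apply,
          Matrix.vecMulVec_apply, Matrix.one_apply, smul_eq_mul,
          Pi.add_apply, Pi.smul_apply]
        have h := hMij i j
        linear_combination (-1 : ℝ) * h - (a i * b j) * ht
          - ((t^2 + 2*σ*t) * (a i * b j)) * hinv
      · show norm3 (α + t • (nb/na) • a) = r
        rw [norm3_eq_iff _ hr.le, dot3_add_smul, dot3_smul_right, dot3_smul_left,
          dot3_smul_right, hαa, hda', ← sq_norm3 α]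
        field_simp
        linear_combination nb^2 * ht + hnb
      · show norm3 (β + t • (na/nb) • b) = s
        rw [norm3_eq_iff _ hs.le, dot3_add_smul, dot3_smul_right, dot3_smul_left,
          dot3_smul_right, hβb, hdb', ← sq_norm3 β]
        field_simp
        linear_combination na^2 * ht + hna
    obtain ⟨ξ, hξ0, hξa, hξb, hξαβ⟩ :
        ∃ ξ : V3, ξ ≠ 0 ∧ dot3 ξ a = 0 ∧ dot3 ξ b = 0 ∧ dot3 ξ (α - β) = 0 := by
      by_cases hw : crossProduct a b = 0
      · obtain ⟨ξ, h0, h1, h2⟩ := exists_perp a (α - β)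
        have hcc := cross_cross3 a a b
        rw [hw, map_zero] at hcc
        have hb2 : dot3 a b • a = dot3 a a • b := sub_eq_zero.mp hcc.symm
        have e1 : dot3 ξ (dot3 a b • a) = dot3 ξ (dot3 a a • b) := by rw [hb2]
        rw [dot3_smul_right, dot3_smul_right, h1, mul_zero] at e1
        have haa : dot3 a a ≠ 0 := by rw [hda']; positivity
        refine ⟨ξ, h0, h1, ?_, h2⟩
        rcases mul_eq_zero.mp e1.symm with h | h
        · exact absurd h haa
        · exact h
      · refine ⟨crossProduct a b, hw, dot3_cross_left a b, dot3_cross_right a b, ?_⟩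
        rw [dot3_comm]; exact hcross
    have hξa' := hξa; have hξb' := hξb; have hξαβ' := hξαβ
    rw [dot3_expand] at hξa' hξb'
    rw [dot3_expand] at hξαβ'
    simp only [Pi.sub_apply] at hξαβ'
    refine ⟨((nb/na) • a, (na/nb) • b,
        vecMulVec ((nb/na) • a) β + vecMulVec α ((na/nb) • b)
          - (2*σ) • vecMulVec ((nb/na) • a) ((na/nb) • b)),
      ⟨ξ, -(dot3 β ξ), hξ0, ?_, ?_, ?_, ?_⟩,
      t₁, t₂, by linarith, by linarith, hkey t₁ hq1, hkey t₂ hq2⟩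
    · funext i
      have hβξ : dot3 β ξ = β 0 * ξ 0 + β 1 * ξ 1 + β 2 * ξ 2 := dot3_expand β ξ
      simp only [Matrix.mulVec, dotProduct, Fin.sum_univ_three, Pi.add_apply,
        Pi.smul_apply, Pi.zero_apply, smul_eq_mul, Matrix.add_apply, Matrix.sub_apply,
        Matrix.smul_apply, Matrix.vecMulVec_apply, hβξ]
      linear_combination ((α i - 2*σ*((nb/na) * a i)) * (na/nb)) * hξb'
    · funext j
      have hβξ : dot3 β ξ = β 0 * ξ 0 + β 1 * ξ 1 + β 2 * ξ 2 := dot3_expand β ξ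
      simp only [Matrix.mulVec, dotProduct, Fin.sum_univ_three, Pi.add_apply,
        Pi.smul_apply, Pi.zero_apply, smul_eq_mul, Matrix.add_apply, Matrix.sub_apply,
        Matrix.smul_apply, Matrix.vecMulVec_apply, Matrix.transpose_apply, hβξ]
      linear_combination ((β j - 2*σ*((na/nb) * b j)) * (nb/na)) * hξa'
        + ((na/nb) * b j) * hξαβ'
    · show dot3 ((nb/na) • a) ξ = 0
      rw [dot3_smul_left, dot3_comm, hξa, mul_zero]
    · show dot3 ((na/nb) • b) ξ = 0
      rw [dot3_smul_left, dot3_comm, hξb, mul_zero]
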